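/- arXiv:0912.4337 — 3 statements merged into one kernel-verified Lean document; each statement's English description precedes it below -/
import Mathlib

section
/- Let k₊, k₀ : (0,∞) → (0,∞) and let λ₊ > 0. Assume: (i) for every s < 0, lim_{t→∞} k₊(t)/k₊(t+s) = e^{λ₊ s}; (ii) for every s < 0, lim_{t→∞} k₀(t+s)/k₀(t) = 1; (iii) there exist constants C > 0 and T > 0 such that k₊(t) ≤ C k₀(t) for all t > T. Then lim_{t→∞} k₊(t)/k₀(t) = 0. -/
open Set Filter Real

/-- Core of Theorem 2.3: if `k₊` has strong ratio limit `e^{λ₊ s}` with `λ₊ > 0`,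
`k₀` has strong ratio limit `1`, and `k₊ ≤ C k₀` eventually, then `k₊(t)/k₀(t) → 0`. -/
theorem subcritical_vs_critical_ratio_limit
    (kp k0 : ℝ → ℝ)
    (hkp_pos : ∀ t ∈ Ioi (0 : ℝ), 0 < kp t)
    (hk0_pos : ∀ t ∈ Ioi (0 : ℝ), 0 < k0 t)
    (lamp : ℝ) (hlamp : 0 < lamp)
    (hratio_p : ∀ s < (0 : ℝ),
      Tendsto (fun t => kp t / kp (t + s)) atTop (nhds (Real.exp (lamp * s))))
    (hratio_0 : ∀ s < (0 : ℝ),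
      Tendsto (fun t => k0 (t + s) / k0 t) atTop (nhds 1))
    (C T : ℝ) (hC : 0 < C) (hT : 0 < T)
    (hbound : ∀ t > T, kp t ≤ C * k0 t) :
    Tendsto (fun t => kp t / k0 t) atTop (nhds 0) := by
  rw [Metric.tendsto_atTop]
  intro ε hε
  set s : ℝ := min ((Real.log (ε / (2 * C))) / lamp - 1) (-1) with hs_def
  have hs_neg : s < 0 := lt_of_le_of_lt (min_le_right _ _) (by norm_num)
  have hεC : (0 : ℝ) < ε / (2 * C) := by positivity
  have hexp : Real.exp (lamp * s) < ε / (2 * C) := by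
    have h1 : lamp * s ≤ lamp * ((Real.log (ε / (2 * C))) / lamp - 1) :=
      mul_le_mul_of_nonneg_left (min_le_left _ _) hlamp.le
    calc Real.exp (lamp * s)
        ≤ Real.exp (lamp * ((Real.log (ε / (2 * C))) / lamp - 1)) := Real.exp_le_exp.2 h1
      _ = (ε / (2 * C)) * Real.exp (-lamp) := by
          rw [mul_sub, mul_div_cancel₀ _ hlamp.ne', mul_one, Real.exp_sub,
            Real.exp_log hεC, Real.exp_neg, div_eq_mul_inv]
      _ < (ε / (2 * C)) * 1 := by
          apply mul_lt_mul_of_pos_left _ hεC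
          rw [Real.exp_lt_one_iff]; linarith
      _ = ε / (2 * C) := mul_one _
  have hf : Tendsto (fun t => (kp t / kp (t + s)) * (k0 (t + s) / k0 t)) atTop
      (nhds (Real.exp (lamp * s))) := by
    have := (hratio_p s hs_neg).mul (hratio_0 s hs_neg)
    simpa using this
  have hev1 : ∀ᶠ t in atTop, (kp t / kp (t + s)) * (k0 (t + s) / k0 t) < ε / (2 * C) :=
    hf.eventually_lt_const hexp
  have hev2 : ∀ᶠ t in atTop, T - s < t := eventually_gt_atTop _
  have hev3 : ∀ᶠ t in atTop, (0 : ℝ) < t := eventually_gt_atTop 0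
  obtain ⟨N, hN⟩ := eventually_atTop.1 ((hev1.and hev2).and hev3)
  refine ⟨N, fun t ht => ?_⟩
  obtain ⟨⟨h1, h2⟩, h3⟩ := hN t ht
  have htsT : T < t + s := by linarith
  have hts : (0 : ℝ) < t + s := by linarith
  have hkpts := hkp_pos (t + s) hts
  have hk0ts := hk0_pos (t + s) hts
  have hkpt := hkp_pos t h3
  have hk0t := hk0_pos t h3
  have hbd : kp (t + s) / k0 (t + s) ≤ C := (div_le_iff₀ hk0ts).2 (hbound _ htsT)
  have hid : kp t / k0 t
      = ((kp t / kp (t + s)) * (k0 (t + s) / k0 t)) * (kp (t + s) / k0 (t + s)) := by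
    field_simp
  have hnn : 0 ≤ (kp t / kp (t + s)) * (k0 (t + s) / k0 t) := by positivity
  have hlt : kp t / k0 t < ε := by
    rw [hid]
    calc ((kp t / kp (t + s)) * (k0 (t + s) / k0 t)) * (kp (t + s) / k0 (t + s))
        ≤ ((kp t / kp (t + s)) * (k0 (t + s) / k0 t)) * C :=
          mul_le_mul_of_nonneg_left hbd hnn
      _ < (ε / (2 * C)) * C := mul_lt_mul_of_pos_right h1 hC
      _ = ε / 2 := by field_simp
      _ < ε := by linarith
  rw [Real.dist_eq, sub_zero, abs_of_pos (div_pos hkpt hk0t)]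
  exact hlt
end

section
/- Let (M,μ) be a σ-finite measure space, k : M × M × (0,∞) → [0,∞) a jointly measurable kernel, V : M → ℝ a measurable function, and C > 0 a constant such that the 3-k inequality ∫₀ᵗ ∫_M k(x,z,t−s) |V(z)| k(z,y,s) dμ(z) ds ≤ C k(x,y,t) holds for all x, y ∈ M and t > 0. Define the iterated kernels by k⁽⁰⁾ := k and k⁽ʲ⁾(x,y,t) := ∫₀ᵗ ∫_M k⁽ʲ⁻¹⁾(x,z,t−s) V(z) k(z,y,s) dμ(z) ds for j ≥ 1 (these integrals being well defined and jointly measurable). Then for every j ≥ 0 and all x, y ∈ M, t > 0, one has |k⁽ʲ⁾(x,y,t)| ≤ Cʲ · k(x,y,t). -/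
open Set MeasureTheory

/-- Inductive estimate in the proof of Theorem 5.4: if `V` is a `k`-bounded perturbation
(3-k inequality with constant `C`), then the iterated kernels satisfy
`|k⁽ʲ⁾(x,y,t)| ≤ Cʲ k(x,y,t)`. -/
theorem iterated_kernels_bound
    {M : Type*} [MeasurableSpace M] (μ : Measure M) [SigmaFinite μ]
    (k : M → M → ℝ → ℝ)
    (hk_nonneg : ∀ x y : M, ∀ t > (0 : ℝ), 0 ≤ k x y t)
    (hk_meas : Measurable fun p : M × M × ℝ => k p.1 p.2.1 p.2.2)
    (V : M → ℝ) (hV_meas : Measurable V)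
    (C : ℝ) (hC : 0 < C)
    (h3k : ∀ x y : M, ∀ t > (0 : ℝ),
      (∫ s in Ioo (0 : ℝ) t, ∫ z, k x z (t - s) * |V z| * k z y s ∂μ) ≤ C * k x y t)
    -- the iterated kernels: `K 0 = k` and
    -- `K (j+1) (x,y,t) = ∫₀ᵗ ∫_M K j (x,z,t−s) V(z) k(z,y,s) dμ(z) ds`,
    -- all the integrals involved being well defined and jointly measurable
    (K : ℕ → M → M → ℝ → ℝ)
    (hK_zero : ∀ x y : M, ∀ t > (0 : ℝ), K 0 x y t = k x y t)
    (hK_meas : ∀ j : ℕ, Measurable fun p : M × M × ℝ => K j p.1 p.2.1 p.2.2)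
    (hK_int : ∀ j : ℕ, ∀ x y : M, ∀ t > (0 : ℝ),
      IntegrableOn (fun p : ℝ × M => K j x p.2 (t - p.1) * V p.2 * k p.2 y p.1)
        (Ioo (0 : ℝ) t ×ˢ univ) ((volume : Measure ℝ).prod μ))
    (hK_succ : ∀ j : ℕ, ∀ x y : M, ∀ t > (0 : ℝ),
      K (j + 1) x y t = ∫ s in Ioo (0 : ℝ) t, ∫ z, K j x z (t - s) * V z * k z y s ∂μ) :
    ∀ j : ℕ, ∀ x y : M, ∀ t > (0 : ℝ), |K j x y t| ≤ C ^ j * k x y t := by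
  intro j
  induction j with
  | zero =>
    intro x y t ht
    rw [hK_zero x y t ht, pow_zero, one_mul, abs_of_nonneg (hk_nonneg x y t ht)]
  | succ j ih =>
    intro x y t ht
    set ρ := ((volume : Measure ℝ).restrict (Ioo (0:ℝ) t)).prod μ with hρ
    have hρ_eq : ρ = ((volume : Measure ℝ).prod μ).restrict (Ioo (0:ℝ) t ×ˢ univ) := by
      rw [hρ, ← Measure.restrict_prod_eq_prod_univ]
    have hae : ∀ᵐ p ∂ρ, p.1 ∈ Ioo (0:ℝ) t := by
      rw [hρ_eq]
      filter_upwards [ae_restrict_mem (measurableSet_Ioo.prod MeasurableSet.univ)] with p hp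
      exact hp.1
    have hf_int : Integrable (fun p : ℝ × M => K j x p.2 (t - p.1) * V p.2 * k p.2 y p.1) ρ := by
      rw [hρ_eq]; exact hK_int j x y t ht
    have h0_int : Integrable (fun p : ℝ × M => k x p.2 (t - p.1) * V p.2 * k p.2 y p.1) ρ := by
      have h : Integrable (fun p : ℝ × M => K 0 x p.2 (t - p.1) * V p.2 * k p.2 y p.1) ρ := by
        rw [hρ_eq]; exact hK_int 0 x y t ht
      refine h.congr ?_
      filter_upwards [hae] with p hp
      rw [hK_zero x p.2 (t - p.1) (sub_pos.mpr hp.2)]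
    have hg_int : Integrable (fun p : ℝ × M => k x p.2 (t - p.1) * |V p.2| * k p.2 y p.1) ρ := by
      refine h0_int.abs.congr ?_
      filter_upwards [hae] with p hp
      have h1 : 0 ≤ k x p.2 (t - p.1) := hk_nonneg _ _ _ (sub_pos.mpr hp.2)
      have h2 : 0 ≤ k p.2 y p.1 := hk_nonneg _ _ _ hp.1
      rw [abs_mul, abs_mul, abs_of_nonneg h1, abs_of_nonneg h2]
    have key : K (j+1) x y t = ∫ p, K j x p.2 (t - p.1) * V p.2 * k p.2 y p.1 ∂ρ := by
      rw [hK_succ j x y t ht]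
      exact integral_integral hf_int
    calc |K (j+1) x y t|
        = |∫ p, K j x p.2 (t - p.1) * V p.2 * k p.2 y p.1 ∂ρ| := by rw [key]
      _ ≤ ∫ p, |K j x p.2 (t - p.1) * V p.2 * k p.2 y p.1| ∂ρ :=
          by simpa only [Real.norm_eq_abs] using
            norm_integral_le_integral_norm (fun p : ℝ × M => K j x p.2 (t - p.1) * V p.2 * k p.2 y p.1) (μ := ρ)
      _ ≤ ∫ p, C^j * (k x p.2 (t - p.1) * |V p.2| * k p.2 y p.1) ∂ρ := by
          refine integral_mono_ae hf_int.abs (hg_int.const_mul _) ?_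
          filter_upwards [hae] with p hp
          have h1 : (0:ℝ) < t - p.1 := sub_pos.mpr hp.2
          have h2 : 0 ≤ k p.2 y p.1 := hk_nonneg _ _ _ hp.1
          have hkk : 0 ≤ k x p.2 (t - p.1) := hk_nonneg _ _ _ h1
          have hih := ih x p.2 (t - p.1) h1
          calc |K j x p.2 (t - p.1) * V p.2 * k p.2 y p.1|
              = |K j x p.2 (t - p.1)| * |V p.2| * k p.2 y p.1 := by
                rw [abs_mul, abs_mul, abs_of_nonneg h2]
            _ ≤ (C^j * k x p.2 (t - p.1)) * |V p.2| * k p.2 y p.1 := by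
                gcongr
            _ = C^j * (k x p.2 (t - p.1) * |V p.2| * k p.2 y p.1) := by ring
      _ = C^j * ∫ p, k x p.2 (t - p.1) * |V p.2| * k p.2 y p.1 ∂ρ :=
          integral_const_mul _ _
      _ = C^j * ∫ s in Ioo (0:ℝ) t, ∫ z, k x z (t - s) * |V z| * k z y s ∂μ := by
          rw [integral_integral hg_int]
      _ ≤ C^j * (C * k x y t) :=
          mul_le_mul_of_nonneg_left (h3k x y t ht) (pow_nonneg hC.le j)
      _ = C^(j+1) * k x y t := by ring
end

section
/- Let (M,μ) be a σ-finite measure space, k : M × M × (0,∞) → [0,∞) a jointly measurable kernel, V : M → ℝ a measurable function, and C > 0 a constant such that the 3-k inequality ∫₀ᵗ ∫_M k(x,z,t−s) |V(z)| k(z,y,s) dμ(z) ds ≤ C k(x,y,t) holds for all x, y ∈ M and t > 0. Define the iterated kernels by k⁽⁰⁾ := k and k⁽ʲ⁾(x,y,t) := ∫₀ᵗ ∫_M k⁽ʲ⁻¹⁾(x,z,t−s) V(z) k(z,y,s) dμ(z) ds for j ≥ 1, and for a real ε with |ε| < 1/(2C) set k_ε(x,y,t) := ∑_{j=0}^∞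 (−ε)ʲ k⁽ʲ⁾(x,y,t). Then for all x, y ∈ M and t > 0, ((1 − 2C|ε|)/(1 − C|ε|)) · k(x,y,t) ≤ k_ε(x,y,t) ≤ (1 − C|ε|)⁻¹ · k(x,y,t); in particular the kernels k_ε and k are equivalent (each is bounded above by a constant multiple of the other). -/
open Set MeasureTheory

/-- Two-sided equivalence bound underlying Theorem 5.4: if `V` is a `k`-bounded
perturbation (3-k inequality with constant `C`) and `|ε| < 1/(2C)`, then the kernel
`k_ε(x,y,t) := ∑ⱼ (−ε)ʲ k⁽ʲ⁾(x,y,t)` given by the Neumann series satisfies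
`((1 − 2C|ε|)/(1 − C|ε|)) k ≤ k_ε ≤ (1 − C|ε|)⁻¹ k`; in particular `k_ε` and `k`
are equivalent. -/
theorem neumann_series_kernel_equivalence
    {M : Type*} [MeasurableSpace M] (μ : Measure M) [SigmaFinite μ]
    (k : M → M → ℝ → ℝ)
    (hk_nonneg : ∀ x y : M, ∀ t > (0 : ℝ), 0 ≤ k x y t)
    (hk_meas : Measurable fun p : M × M × ℝ => k p.1 p.2.1 p.2.2)
    (V : M → ℝ) (hV_meas : Measurable V)
    (C : ℝ) (hC : 0 < C)
    (h3k : ∀ x y : M, ∀ t > (0 : ℝ),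
      (∫ s in Ioo (0 : ℝ) t, ∫ z, k x z (t - s) * |V z| * k z y s ∂μ) ≤ C * k x y t)
    (K : ℕ → M → M → ℝ → ℝ)
    (hK_zero : ∀ x y : M, ∀ t > (0 : ℝ), K 0 x y t = k x y t)
    (hK_meas : ∀ j : ℕ, Measurable fun p : M × M × ℝ => K j p.1 p.2.1 p.2.2)
    (hK_int : ∀ j : ℕ, ∀ x y : M, ∀ t > (0 : ℝ),
      IntegrableOn (fun p : ℝ × M => K j x p.2 (t - p.1) * V p.2 * k p.2 y p.1)
        (Ioo (0 : ℝ) t ×ˢ univ) ((volume : Measure ℝ).prod μ))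
    (hK_succ : ∀ j : ℕ, ∀ x y : M, ∀ t > (0 : ℝ),
      K (j + 1) x y t = ∫ s in Ioo (0 : ℝ) t, ∫ z, K j x z (t - s) * V z * k z y s ∂μ)
    (ε : ℝ) (hε : |ε| < 1 / (2 * C))
    (keps : M → M → ℝ → ℝ)
    (hkeps : ∀ x y : M, ∀ t > (0 : ℝ), keps x y t = ∑' j : ℕ, (-ε) ^ j * K j x y t) :
    ∀ x y : M, ∀ t > (0 : ℝ),
      ((1 - 2 * C * |ε|) / (1 - C * |ε|)) * k x y t ≤ keps x y t ∧
      keps x y t ≤ (1 - C * |ε|)⁻¹ * k x y t := by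
  -- main bound: |K j x y t| ≤ C^j * k x y t
  have key : ∀ j : ℕ, ∀ x y : M, ∀ t > (0 : ℝ), |K j x y t| ≤ C ^ j * k x y t := by
    intro j
    induction j with
    | zero =>
      intro x y t ht
      rw [hK_zero x y t ht, abs_of_nonneg (hk_nonneg x y t ht)]
      simp
    | succ j ih =>
      intro x y t ht
      rw [hK_succ j x y t ht]
      -- integrability of the majorant g
      have hg_int : IntegrableOn (fun p : ℝ × M => k x p.2 (t - p.1) * |V p.2| * k p.2 y p.1)
          (Ioo (0 : ℝ) t ×ˢ univ) ((volume : Measure ℝ).prod μ) := by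
        have h0 := hK_int 0 x y t ht
        have h0' : IntegrableOn (fun p : ℝ × M => k x p.2 (t - p.1) * V p.2 * k p.2 y p.1)
            (Ioo (0 : ℝ) t ×ˢ univ) ((volume : Measure ℝ).prod μ) := by
          refine IntegrableOn.congr_fun h0 (fun p hp => ?_) ((measurableSet_Ioo).prod MeasurableSet.univ)
          have hp1 : p.1 ∈ Ioo (0 : ℝ) t := hp.1
          rw [hK_zero x p.2 (t - p.1) (sub_pos.mpr hp1.2)]
        refine IntegrableOn.congr_fun h0'.abs (fun p hp => ?_) ((measurableSet_Ioo).prod MeasurableSet.univ)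
        have hp1 : p.1 ∈ Ioo (0 : ℝ) t := hp.1
        have h1 : 0 ≤ k x p.2 (t - p.1) := hk_nonneg x p.2 _ (by linarith [hp1.2])
        have h2 : 0 ≤ k p.2 y p.1 := hk_nonneg p.2 y _ hp1.1
        rw [abs_mul, abs_mul, abs_of_nonneg h1, abs_of_nonneg h2]
      -- rewrite as product measure on restricted measures
      rw [IntegrableOn, ← Measure.prod_restrict, Measure.restrict_univ] at hg_int
      set ν := (volume : Measure ℝ).restrict (Ioo (0 : ℝ) t) with hν
      have hg_ae : ∀ᵐ s ∂ν, Integrable (fun z => k x z (t - s) * |V z| * k z y s) μ :=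
        hg_int.prod_right_ae
      have hG_int : Integrable (fun s => ∫ z, k x z (t - s) * |V z| * k z y s ∂μ) ν :=
        hg_int.integral_prod_left
      calc |∫ s in Ioo (0 : ℝ) t, ∫ z, K j x z (t - s) * V z * k z y s ∂μ|
          ≤ ∫ s in Ioo (0 : ℝ) t, |∫ z, K j x z (t - s) * V z * k z y s ∂μ| := by
            simp only [← Real.norm_eq_abs]
            exact norm_integral_le_integral_norm _
        _ ≤ ∫ s in Ioo (0 : ℝ) t,
              C ^ j * ∫ z, k x z (t - s) * |V z| * k z y s ∂μ := by
            refine integral_mono_of_nonneg (Filter.Eventually.of_forall fun s => abs_nonneg _)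
              (hG_int.const_mul _) ?_
            filter_upwards [hg_ae, ae_restrict_mem measurableSet_Ioo] with s hgs hs
            have hts : 0 < t - s := by simp only [mem_Ioo] at hs; linarith [hs.2]
            calc |∫ z, K j x z (t - s) * V z * k z y s ∂μ|
                ≤ ∫ z, |K j x z (t - s) * V z * k z y s| ∂μ := by
                  simp only [← Real.norm_eq_abs]
                  exact norm_integral_le_integral_norm _
              _ ≤ ∫ z, C ^ j * (k x z (t - s) * |V z| * k z y s) ∂μ := by
                  refine integral_mono_of_nonneg
                    (Filter.Eventually.of_forall fun z => abs_nonneg _)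
                    (hgs.const_mul _) (Filter.Eventually.of_forall fun z => ?_)
                  have h2 : 0 ≤ k z y s := hk_nonneg z y s (by simp only [mem_Ioo] at hs; exact hs.1)
                  simp only []
                  rw [abs_mul, abs_mul, abs_of_nonneg h2]
                  have := ih x z (t - s) hts
                  have hVz : (0:ℝ) ≤ |V z| := abs_nonneg _
                  nlinarith [mul_le_mul_of_nonneg_right (ih x z (t - s) hts)
                    (mul_nonneg (abs_nonneg (V z)) h2), abs_nonneg (K j x z (t - s)),
                    hk_nonneg x z (t - s) hts]
              _ = C ^ j * ∫ z, k x z (t - s) * |V z| * k z y s ∂μ := integral_const_mul _ _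
        _ = C ^ j * ∫ s in Ioo (0 : ℝ) t, ∫ z, k x z (t - s) * |V z| * k z y s ∂μ :=
            integral_const_mul _ _
        _ ≤ C ^ j * (C * k x y t) := by
            refine mul_le_mul_of_nonneg_left (h3k x y t ht) (by positivity)
        _ = C ^ (j + 1) * k x y t := by ring
  intro x y t ht
  set r := C * |ε| with hr
  have hr0 : 0 ≤ r := by positivity
  have hr2 : r < 1 / 2 := by
    calc r < C * (1 / (2 * C)) := mul_lt_mul_of_pos_left hε hC
      _ = 1 / 2 := by rw [mul_one_div, div_eq_div_iff (by positivity) (by norm_num)]; ring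
  have hr1 : r < 1 := by linarith
  have hk0 : 0 ≤ k x y t := hk_nonneg x y t ht
  -- term bound
  have hterm : ∀ j : ℕ, |(-ε) ^ j * K j x y t| ≤ r ^ j * k x y t := by
    intro j
    rw [abs_mul, abs_pow, abs_neg]
    calc |ε| ^ j * |K j x y t| ≤ |ε| ^ j * (C ^ j * k x y t) :=
          mul_le_mul_of_nonneg_left (key j x y t ht) (by positivity)
      _ = r ^ j * k x y t := by rw [hr, mul_pow]; ring
  have hgsum : Summable (fun j : ℕ => r ^ j * k x y t) :=
    (summable_geometric_of_lt_one hr0 hr1).mul_right _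
  have hsum : Summable (fun j : ℕ => (-ε) ^ j * K j x y t) :=
    Summable.of_abs (hgsum.of_nonneg_of_le (fun j => abs_nonneg _) hterm)
  have hgeom : ∑' j : ℕ, r ^ j * k x y t = (1 - r)⁻¹ * k x y t := by
    rw [tsum_mul_right, tsum_geometric_of_lt_one hr0 hr1]
  rw [hkeps x y t ht]
  constructor
  · -- lower bound
    have hsplit : ∑' j : ℕ, (-ε) ^ j * K j x y t
        = (-ε) ^ 0 * K 0 x y t + ∑' j : ℕ, (-ε) ^ (j + 1) * K (j + 1) x y t := by
      exact Summable.tsum_eq_zero_add hsum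
    have htail_sum : Summable (fun j : ℕ => (-ε) ^ (j + 1) * K (j + 1) x y t) :=
      (summable_nat_add_iff (f := fun j : ℕ => (-ε) ^ j * K j x y t) 1).mpr hsum
    have hgtail : Summable (fun j : ℕ => r ^ (j + 1) * k x y t) :=
      (summable_nat_add_iff (f := fun j : ℕ => r ^ j * k x y t) 1).mpr hgsum
    have htail : -(∑' j : ℕ, r ^ (j + 1) * k x y t)
        ≤ ∑' j : ℕ, (-ε) ^ (j + 1) * K (j + 1) x y t := by
      rw [← tsum_neg]
      exact Summable.tsum_le_tsum (fun j => neg_le_of_abs_le (hterm (j + 1))) hgtail.neg htail_sum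
    have hgtv : ∑' j : ℕ, r ^ (j + 1) * k x y t = r * (1 - r)⁻¹ * k x y t := by
      have : ∀ j : ℕ, r ^ (j + 1) * k x y t = r * (r ^ j * k x y t) := by
        intro j; ring
      rw [tsum_congr this, tsum_mul_left, hgeom]; ring
    rw [hsplit, hK_zero x y t ht]
    simp only [pow_zero, one_mul]
    have h1r : 0 < 1 - r := by linarith
    have hne : (1 - C * |ε|) ≠ 0 := by rw [← hr]; linarith
    have hco : (1 - 2 * C * |ε|) / (1 - C * |ε|) = 1 - r * (1 - r)⁻¹ := by
      rw [hr]; field_simp; ring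
    have : (1 - 2 * C * |ε|) / (1 - C * |ε|) * k x y t
        = k x y t - r * (1 - r)⁻¹ * k x y t := by
      rw [hco]; ring
    rw [this]
    linarith [htail, hgtv ▸ htail]
  · -- upper bound
    have h1r : 0 < 1 - r := by linarith
    calc ∑' j : ℕ, (-ε) ^ j * K j x y t
        ≤ ∑' j : ℕ, r ^ j * k x y t :=
          Summable.tsum_le_tsum (fun j => le_of_abs_le (hterm j)) hsum hgsum
      _ = (1 - r)⁻¹ * k x y t := hgeom
      _ = (1 - C * |ε|)⁻¹ * k x y t := by rw [hr]
end
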